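/- Let M₁ be a general rotational surface of elliptic type with plane meridians in E⁴₂, with orthonormal normal frame n₁ = (βg·sin(αv), −βg·cos(αv), αf·sin(βv), −αf·cos(βv))/√(β²g² − α²f²) and n₂ = (g'·cos(αv), g'·sin(αv), f'·cos(βv), f'·sin(βv))/√(f'² − g'²). Let G₁ be the 2×2 matrix diag(E, G) with E = g₀(z_u,z_u), G = g₀(z_v,z_v), and for k = 1, 2 let H_k be the 2×2 matrix with entries (H_k)₁₁ = g₀(z_uu, n_k), (H_k)₁₂ = (H_k)₂₁ = g₀(z_uv, n_k), (H_k)₂₂ = g₀(z_vv, n_k), so that A_k = G₁⁻¹·H_k is the matrix of the shape operator A_{n_k} in the basis (z_u, z_v). Then trace(A₁·A₂) = 0 at every point (u,v); consequently the allied mean curvature vector a(H) = (‖H‖/2)·tr(A₁∘A₂)·n₂ vanishes identically, i.e. M₁ is a Chen surface in E⁴₂. -/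

import Mathlib

noncomputable section

open Matrix

/-- The neutral metric `g₀` of `𝔼⁴₂`. -/
def neutralMetric (v w : Fin 4 → ℝ) : ℝ :=
  v 0 * w 0 + v 1 * w 1 - v 2 * w 2 - v 3 * w 3

/-- Parametrization of the general rotational surface of elliptic type. -/
def zEll (α β : ℝ) (f g : ℝ → ℝ) (u v : ℝ) : Fin 4 → ℝ :=
  ![f u * Real.cos (α * v), f u * Real.sin (α * v),
    g u * Real.cos (β * v), g u * Real.sin (β * v)]

def zEll_u (α β : ℝ) (f g : ℝ → ℝ) (u v : ℝ) : Fin 4 → ℝ :=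
  deriv (fun t => zEll α β f g t v) u

def zEll_v (α β : ℝ) (f g : ℝ → ℝ) (u v : ℝ) : Fin 4 → ℝ :=
  deriv (fun t => zEll α β f g u t) v

def zEll_uu (α β : ℝ) (f g : ℝ → ℝ) (u v : ℝ) : Fin 4 → ℝ :=
  deriv (fun t => zEll_u α β f g t v) u

def zEll_uv (α β : ℝ) (f g : ℝ → ℝ) (u v : ℝ) : Fin 4 → ℝ :=
  deriv (fun t => zEll_u α β f g u t) v

def zEll_vv (α β : ℝ) (f g : ℝ → ℝ) (u v : ℝ) : Fin 4 → ℝ :=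
  deriv (fun t => zEll_v α β f g u t) v

/-- The unit spacelike normal `n₁` of the general rotational surface of elliptic type. -/
def n1Ell (α β : ℝ) (f g : ℝ → ℝ) (u v : ℝ) : Fin 4 → ℝ :=
  (1 / Real.sqrt (β ^ 2 * (g u) ^ 2 - α ^ 2 * (f u) ^ 2)) •
    ![β * g u * Real.sin (α * v), -(β * g u * Real.cos (α * v)),
      α * f u * Real.sin (β * v), -(α * f u * Real.cos (β * v))]

/-- The unit timelike normal `n₂` of the general rotational surface of elliptic type. -/
def n2Ell (α β : ℝ) (f g : ℝ → ℝ) (u v : ℝ) : Fin 4 → ℝ :=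
  (1 / Real.sqrt ((deriv f u) ^ 2 - (deriv g u) ^ 2)) •
    ![deriv g u * Real.cos (α * v), deriv g u * Real.sin (α * v),
      deriv f u * Real.cos (β * v), deriv f u * Real.sin (β * v)]

/-- The matrix of the first fundamental form in the basis `(z_u, z_v)`. -/
def G1Ell (α β : ℝ) (f g : ℝ → ℝ) (u v : ℝ) : Matrix (Fin 2) (Fin 2) ℝ :=
  !![neutralMetric (zEll_u α β f g u v) (zEll_u α β f g u v), 0;
     0, neutralMetric (zEll_v α β f g u v) (zEll_v α β f g u v)]

/-- The matrix of the second fundamental form with respect to a normal `n`. -/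
def secFFEll (α β : ℝ) (f g : ℝ → ℝ) (u v : ℝ) (n : Fin 4 → ℝ) :
    Matrix (Fin 2) (Fin 2) ℝ :=
  !![neutralMetric (zEll_uu α β f g u v) n, neutralMetric (zEll_uv α β f g u v) n;
     neutralMetric (zEll_uv α β f g u v) n, neutralMetric (zEll_vv α β f g u v) n]

/-- The matrix of the shape operator `A_n` in the basis `(z_u, z_v)`. -/
def shapeEll (α β : ℝ) (f g : ℝ → ℝ) (u v : ℝ) (n : Fin 4 → ℝ) :
    Matrix (Fin 2) (Fin 2) ℝ :=
  (G1Ell α β f g u v)⁻¹ * secFFEll α β f g u v n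

/-! ### Auxiliary lemmas -/

/-- If `H₁` has zero diagonal and `H₂` is diagonal, and `G₁` is diagonal, then
`tr((G₁⁻¹H₁)(G₁⁻¹H₂)) = 0`. -/
lemma trace_aux (E G c a b : ℝ) :
    Matrix.trace ((!![E,0;0,G] : Matrix (Fin 2) (Fin 2) ℝ)⁻¹ * !![0,c;c,0] *
      ((!![E,0;0,G] : Matrix (Fin 2) (Fin 2) ℝ)⁻¹ * !![a,0;0,b])) = 0 := by
  simp [Matrix.inv_def, Matrix.adjugate_fin_two_of, Matrix.trace_fin_two,
    Matrix.mul_apply, Fin.sum_univ_two, Matrix.det_fin_two_of]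

/-- `u`-derivative of the parametrization. -/
lemma hasDerivAt_zEll_u (α β : ℝ) (f g : ℝ → ℝ) (u v f' g' : ℝ)
    (hf : HasDerivAt f f' u) (hg : HasDerivAt g g' u) :
    HasDerivAt (fun t => zEll α β f g t v)
      ![f' * Real.cos (α * v), f' * Real.sin (α * v),
        g' * Real.cos (β * v), g' * Real.sin (β * v)] u := by
  rw [hasDerivAt_pi]
  intro i
  fin_cases i <;> simp only [zEll, Matrix.cons_val_zero, Matrix.cons_val_one,
    Matrix.head_cons, Matrix.cons_val_two, Matrix.tail_cons, Matrix.cons_val_three,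
    Fin.isValue] <;>
  · first
    | exact hf.mul_const _
    | exact hg.mul_const _

/-- `v`-derivative of the parametrization. -/
lemma hasDerivAt_zEll_v (α β : ℝ) (f g : ℝ → ℝ) (u v : ℝ) :
    HasDerivAt (fun s => zEll α β f g u s)
      ![f u * (-Real.sin (α * v) * α), f u * (Real.cos (α * v) * α),
        g u * (-Real.sin (β * v) * β), g u * (Real.cos (β * v) * β)] v := by
  have hα : HasDerivAt (fun s : ℝ => α * s) α v := by
    simpa using (hasDerivAt_id v).const_mul α
  have hβ : HasDerivAt (fun s : ℝ => β * s) β v := by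
    simpa using (hasDerivAt_id v).const_mul β
  rw [hasDerivAt_pi]
  intro i
  fin_cases i <;> simp only [zEll, Matrix.cons_val_zero, Matrix.cons_val_one,
    Matrix.head_cons, Matrix.cons_val_two, Matrix.tail_cons, Matrix.cons_val_three,
    Fin.isValue] <;>
  · first
    | exact (hα.cos).const_mul _
    | exact (hα.sin).const_mul _
    | exact (hβ.cos).const_mul _
    | exact (hβ.sin).const_mul _

lemma zEll_v_eq (α β : ℝ) (f g : ℝ → ℝ) (u v : ℝ) :
    zEll_v α β f g u v =
      ![f u * (-Real.sin (α * v) * α), f u * (Real.cos (α * v) * α),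
        g u * (-Real.sin (β * v) * β), g u * (Real.cos (β * v) * β)] :=
  (hasDerivAt_zEll_v α β f g u v).deriv

/-- Second `v`-derivative. -/
lemma zEll_vv_eq (α β : ℝ) (f g : ℝ → ℝ) (u v : ℝ) :
    zEll_vv α β f g u v =
      ![f u * (-(Real.cos (α * v) * α) * α), f u * (-Real.sin (α * v) * α * α),
        g u * (-(Real.cos (β * v) * β) * β), g u * (-Real.sin (β * v) * β * β)] := by
  have hα : ∀ s : ℝ, HasDerivAt (fun s : ℝ => α * s) α s := fun s => by
    simpa using (hasDerivAt_id s).const_mul α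
  have hβ : ∀ s : ℝ, HasDerivAt (fun s : ℝ => β * s) β s := fun s => by
    simpa using (hasDerivAt_id s).const_mul β
  have key : HasDerivAt (fun s => zEll_v α β f g u s)
      ![f u * (-(Real.cos (α * v) * α) * α), f u * (-Real.sin (α * v) * α * α),
        g u * (-(Real.cos (β * v) * β) * β), g u * (-Real.sin (β * v) * β * β)] v := by
    have heq : (fun s => zEll_v α β f g u s) =
        fun s => ![f u * (-Real.sin (α * s) * α), f u * (Real.cos (α * s) * α),
          g u * (-Real.sin (β * s) * β), g u * (Real.cos (β * s) * β)] := by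
      funext s; exact zEll_v_eq α β f g u s
    rw [heq, hasDerivAt_pi]
    intro i
    fin_cases i <;> simp only [Matrix.cons_val_zero, Matrix.cons_val_one,
      Matrix.head_cons, Matrix.cons_val_two, Matrix.tail_cons, Matrix.cons_val_three,
      Fin.isValue]
    · exact (((hα v).sin).neg.mul_const α).const_mul (f u)
    · exact (((hα v).cos).mul_const α).const_mul (f u)
    · exact (((hβ v).sin).neg.mul_const β).const_mul (g u)
    · exact (((hβ v).cos).mul_const β).const_mul (g u)
  exact key.deriv

/-- Every general rotational surface of elliptic type is a Chen surface:
`tr(A₁ ∘ A₂) = 0` at every point, hence the allied mean curvature vector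
`a(H) = (‖H‖/2)·tr(A₁∘A₂)·n₂` vanishes identically. -/
theorem chen_surface_elliptic
    (α β p q : ℝ) (hα : 0 < α) (hβ : 0 < β) (hpq : p < q)
    (f g : ℝ → ℝ)
    (hf : ContDiffOn ℝ (⊤ : ℕ∞) f (Set.Ioo p q)) (hg : ContDiffOn ℝ (⊤ : ℕ∞) g (Set.Ioo p q))
    (h1 : ∀ u ∈ Set.Ioo p q, 0 < (deriv f u) ^ 2 - (deriv g u) ^ 2)
    (h2 : ∀ u ∈ Set.Ioo p q, α ^ 2 * (f u) ^ 2 - β ^ 2 * (g u) ^ 2 < 0) :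
    ∀ u ∈ Set.Ioo p q, ∀ v : ℝ,
      Matrix.trace (shapeEll α β f g u v (n1Ell α β f g u v) *
        shapeEll α β f g u v (n2Ell α β f g u v)) = 0 ∧
      ∀ normH : ℝ,
        (normH / 2 * Matrix.trace (shapeEll α β f g u v (n1Ell α β f g u v) *
          shapeEll α β f g u v (n2Ell α β f g u v))) • n2Ell α β f g u v = 0 := by
  intro u hu v
  have hopen : IsOpen (Set.Ioo p q) := isOpen_Ioo
  -- differentiability facts
  have hfd : ∀ t ∈ Set.Ioo p q, HasDerivAt f (deriv f t) t := fun t ht =>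
    (((hf.differentiableOn (by simp)).differentiableAt (hopen.mem_nhds ht))).hasDerivAt
  have hgd : ∀ t ∈ Set.Ioo p q, HasDerivAt g (deriv g t) t := fun t ht =>
    (((hg.differentiableOn (by simp)).differentiableAt (hopen.mem_nhds ht))).hasDerivAt
  have hf' : ContDiffOn ℝ (⊤ : ℕ∞) (deriv f) (Set.Ioo p q) :=
    hf.deriv_of_isOpen hopen (by simp)
  have hg' : ContDiffOn ℝ (⊤ : ℕ∞) (deriv g) (Set.Ioo p q) :=
    hg.deriv_of_isOpen hopen (by simp)
  have hfd2 : HasDerivAt (deriv f) (deriv (deriv f) u) u :=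
    ((hf'.differentiableOn (by simp)).differentiableAt (hopen.mem_nhds hu)).hasDerivAt
  have hgd2 : HasDerivAt (deriv g) (deriv (deriv g) u) u :=
    ((hg'.differentiableOn (by simp)).differentiableAt (hopen.mem_nhds hu)).hasDerivAt
  -- first u-derivative, valid on Ioo
  have hzu : ∀ t ∈ Set.Ioo p q, ∀ w : ℝ, zEll_u α β f g t w =
      ![deriv f t * Real.cos (α * w), deriv f t * Real.sin (α * w),
        deriv g t * Real.cos (β * w), deriv g t * Real.sin (β * w)] := fun t ht w =>
    (hasDerivAt_zEll_u α β f g t w _ _ (hfd t ht) (hgd t ht)).deriv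
  -- z_uu
  have hzuu : zEll_uu α β f g u v =
      ![deriv (deriv f) u * Real.cos (α * v), deriv (deriv f) u * Real.sin (α * v),
        deriv (deriv g) u * Real.cos (β * v), deriv (deriv g) u * Real.sin (β * v)] := by
    have hev : (fun t => zEll_u α β f g t v) =ᶠ[nhds u]
        (fun t => ![deriv f t * Real.cos (α * v), deriv f t * Real.sin (α * v),
          deriv g t * Real.cos (β * v), deriv g t * Real.sin (β * v)]) := by
      filter_upwards [hopen.mem_nhds hu] with t ht using hzu t ht v
    have hder : HasDerivAt
        (fun t => ![deriv f t * Real.cos (α * v), deriv f t * Real.sin (α * v),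
          deriv g t * Real.cos (β * v), deriv g t * Real.sin (β * v)])
        ![deriv (deriv f) u * Real.cos (α * v), deriv (deriv f) u * Real.sin (α * v),
          deriv (deriv g) u * Real.cos (β * v), deriv (deriv g) u * Real.sin (β * v)] u := by
      rw [hasDerivAt_pi]
      intro i
      fin_cases i <;> simp only [Matrix.cons_val_zero, Matrix.cons_val_one,
        Matrix.head_cons, Matrix.cons_val_two, Matrix.tail_cons, Matrix.cons_val_three,
        Fin.isValue] <;>
      · first
        | exact hfd2.mul_const _
        | exact hgd2.mul_const _
    calc zEll_uu α β f g u v = deriv (fun t => zEll_u α β f g t v) u := rfl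
      _ = _ := by rw [hev.deriv_eq, hder.deriv]
  -- z_uv
  have hzuv : zEll_uv α β f g u v =
      ![deriv f u * (-Real.sin (α * v) * α), deriv f u * (Real.cos (α * v) * α),
        deriv g u * (-Real.sin (β * v) * β), deriv g u * (Real.cos (β * v) * β)] := by
    have hαs : ∀ s : ℝ, HasDerivAt (fun s : ℝ => α * s) α s := fun s => by
      simpa using (hasDerivAt_id s).const_mul α
    have hβs : ∀ s : ℝ, HasDerivAt (fun s : ℝ => β * s) β s := fun s => by
      simpa using (hasDerivAt_id s).const_mul β
    have heq : (fun s => zEll_u α β f g u s) =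
        fun s => ![deriv f u * Real.cos (α * s), deriv f u * Real.sin (α * s),
          deriv g u * Real.cos (β * s), deriv g u * Real.sin (β * s)] := by
      funext s; exact hzu u hu s
    have hder : HasDerivAt
        (fun s => ![deriv f u * Real.cos (α * s), deriv f u * Real.sin (α * s),
          deriv g u * Real.cos (β * s), deriv g u * Real.sin (β * s)])
        ![deriv f u * (-Real.sin (α * v) * α), deriv f u * (Real.cos (α * v) * α),
          deriv g u * (-Real.sin (β * v) * β), deriv g u * (Real.cos (β * v) * β)] v := by
      rw [hasDerivAt_pi]
      intro i
      fin_cases i <;> simp only [Matrix.cons_val_zero, Matrix.cons_val_one,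
        Matrix.head_cons, Matrix.cons_val_two, Matrix.tail_cons, Matrix.cons_val_three,
        Fin.isValue]
      · exact ((hαs v).cos).const_mul _
      · exact ((hαs v).sin).const_mul _
      · exact ((hβs v).cos).const_mul _
      · exact ((hβs v).sin).const_mul _
    calc zEll_uv α β f g u v = deriv (fun s => zEll_u α β f g u s) v := rfl
      _ = _ := by rw [heq, hder.deriv]
  -- vanishing of the relevant second fundamental form coefficients
  have e1 : neutralMetric (zEll_uu α β f g u v) (n1Ell α β f g u v) = 0 := by
    rw [hzuu]
    simp only [neutralMetric, n1Ell, Pi.smul_apply, smul_eq_mul,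
      Matrix.cons_val_zero, Matrix.cons_val_one, Matrix.head_cons,
      Matrix.cons_val_two, Matrix.tail_cons, Matrix.cons_val_three, Fin.isValue]
    ring
  have e2 : neutralMetric (zEll_vv α β f g u v) (n1Ell α β f g u v) = 0 := by
    rw [zEll_vv_eq]
    simp only [neutralMetric, n1Ell, Pi.smul_apply, smul_eq_mul,
      Matrix.cons_val_zero, Matrix.cons_val_one, Matrix.head_cons,
      Matrix.cons_val_two, Matrix.tail_cons, Matrix.cons_val_three, Fin.isValue]
    ring
  have e3 : neutralMetric (zEll_uv α β f g u v) (n2Ell α β f g u v) = 0 := by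
    rw [hzuv]
    simp only [neutralMetric, n2Ell, Pi.smul_apply, smul_eq_mul,
      Matrix.cons_val_zero, Matrix.cons_val_one, Matrix.head_cons,
      Matrix.cons_val_two, Matrix.tail_cons, Matrix.cons_val_three, Fin.isValue]
    ring
  -- rewrite the second fundamental forms
  have hH1 : secFFEll α β f g u v (n1Ell α β f g u v) =
      !![0, neutralMetric (zEll_uv α β f g u v) (n1Ell α β f g u v);
         neutralMetric (zEll_uv α β f g u v) (n1Ell α β f g u v), 0] := by
    rw [secFFEll, e1, e2]
  have hH2 : secFFEll α β f g u v (n2Ell α β f g u v) =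
      !![neutralMetric (zEll_uu α β f g u v) (n2Ell α β f g u v), 0;
         0, neutralMetric (zEll_vv α β f g u v) (n2Ell α β f g u v)] := by
    rw [secFFEll, e3]
  have htr : Matrix.trace (shapeEll α β f g u v (n1Ell α β f g u v) *
      shapeEll α β f g u v (n2Ell α β f g u v)) = 0 := by
    rw [shapeEll, shapeEll, hH1, hH2, G1Ell]
    exact trace_aux _ _ _ _ _
  refine ⟨htr, fun normH => ?_⟩
  rw [htr]
  simp
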